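/- There exists a constant $C > 0$ such that for every positive integer $n$, every $x$ in the standard 2-simplex, and $i \in \{1,2\}$, the second moment of the Meyer-König-Zeller-Kantorovič operator satisfies $K_n((u_i - x_i)^2; x) \leq C/n$. -/

import Mathlib

open MeasureTheory Real Set

noncomputable section
open Classical

/-- The standard 2-simplex. -/
def simplex2 : Set (ℝ × ℝ) := {x | 0 ≤ x.1 ∧ 0 ≤ x.2 ∧ x.1 + x.2 ≤ 1}

/-- Meyer-König-Zeller basis functions. -/
def ptil (n k1 k2 : ℕ) (x : ℝ × ℝ) : ℝ :=
  ((n + k1 + k2).factorial : ℝ) / ((n.factorial : ℝ) * k1.factorial * k2.factorial) *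
    x.1 ^ k1 * x.2 ^ k2 * (1 - x.1 - x.2) ^ (n + 1)

/-- The constants `c_{n,k1,k2}`. -/
def cMKZ (n k1 k2 : ℕ) : ℝ :=
  (((n : ℝ) + k1 + k2) ^ 2 * ((n : ℝ) + k1 + k2 + 1) ^ 2) / (((n : ℝ) + k1) * ((n : ℝ) + k2))

/-- The rectangles `△_{k1,k2}`. -/
def triRect (n k1 k2 : ℕ) : Set (ℝ × ℝ) :=
  Icc ((k1 : ℝ) / ((n : ℝ) + k1 + k2)) (((k1 : ℝ) + 1) / ((n : ℝ) + k1 + k2 + 1)) ×ˢ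
  Icc ((k2 : ℝ) / ((n : ℝ) + k1 + k2)) (((k2 : ℝ) + 1) / ((n : ℝ) + k1 + k2 + 1))

/-- Meyer-König-Zeller-Kantorovič operator. -/
def KMKZ (n : ℕ) (f : ℝ × ℝ → ℝ) (x : ℝ × ℝ) : ℝ :=
  ∑' k1 : ℕ, ∑' k2 : ℕ, ptil n k1 k2 x * cMKZ n k1 k2 * ∫ u in triRect n k1 k2, f u

/-- Bivariate Bernstein basis polynomials, with the convention that the value is `0`
whenever `k < 0`, `l < 0` or `k + l > m`. -/
def pB (m : ℕ) (k l : ℤ) (x : ℝ × ℝ) : ℝ :=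
  if 0 ≤ k ∧ 0 ≤ l ∧ k + l ≤ (m : ℤ) then
    ((m.factorial : ℝ) /
        ((k.toNat.factorial : ℝ) * l.toNat.factorial * (m - k.toNat - l.toNat).factorial)) *
      x.1 ^ k.toNat * x.2 ^ l.toNat * (1 - x.1 - x.2) ^ (m - k.toNat - l.toNat)
  else 0

/-- Stancu basis functions. -/
def bStancu (n k l s : ℕ) (x : ℝ × ℝ) : ℝ :=
  (1 - x.1 - x.2) * pB (n - s) k l x + x.1 * pB (n - s) ((k : ℤ) - s) l x +
    x.2 * pB (n - s) k ((l : ℤ) - s) x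

/-- The squares `I_{n,k,l}`. -/
def Isq (n k l : ℕ) : Set (ℝ × ℝ) :=
  Icc ((k : ℝ) / ((n : ℝ) + 2)) (((k : ℝ) + 1) / ((n : ℝ) + 2)) ×ˢ
  Icc ((l : ℝ) / ((n : ℝ) + 2)) (((l : ℝ) + 1) / ((n : ℝ) + 2))

/-- Stancu-Kantorovič operator. -/
def KStancu (n s : ℕ) (f : ℝ × ℝ → ℝ) (x : ℝ × ℝ) : ℝ :=
  ∑ k ∈ Finset.range (n + 1), ∑ l ∈ Finset.range (n + 1 - k),
    bStancu n k l s x * ((n : ℝ) + 2) ^ 2 * ∫ u in Isq n k l, f u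

/-- `Φ` is an N-function. -/
structure IsNFunction (Φ : ℝ → ℝ) : Prop where
  continuous : Continuous Φ
  convex : ConvexOn ℝ (Ici 0) Φ
  zero : Φ 0 = 0
  nonneg : ∀ u, 0 ≤ Φ u
  small : Filter.Tendsto (fun u => Φ u / u) (nhdsWithin 0 (Ioi 0)) (nhds 0)
  large : Filter.Tendsto (fun u => Φ u / u) Filter.atTop Filter.atTop

/-- The `Δ₂` condition for `Φ`. -/
def DeltaTwo (Φ : ℝ → ℝ) : Prop :=
  ∃ c u₀ : ℝ, 0 ≤ u₀ ∧ ∀ u, u₀ ≤ u → Φ (2 * u) ≤ c * Φ u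

/-- The Orlicz norm on the simplex, via the infimum formula. -/
def orliczNorm (Φ : ℝ → ℝ) (f : ℝ × ℝ → ℝ) : ℝ :=
  sInf {y | ∃ α : ℝ, 0 < α ∧ y = (1 / α) * (1 + ∫ x in simplex2, Φ (α * |f x|))}

/-- Membership in the Orlicz space `L_Φ^*(△)`. -/
def MemOrlicz (Φ : ℝ → ℝ) (f : ℝ × ℝ → ℝ) : Prop :=
  AEStronglyMeasurable f (volume.restrict simplex2) ∧
    ∃ α : ℝ, 0 < α ∧ IntegrableOn (fun x => Φ (α * |f x|)) simplex2

/-- Extension of `f` from the simplex to `ℝ²`: by `f(x) = f(1-x)` on `[0,1]²`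
and then `1`-periodically. -/
def extendF (f : ℝ × ℝ → ℝ) (x : ℝ × ℝ) : ℝ :=
  if (Int.fract x.1, Int.fract x.2) ∈ simplex2 then f (Int.fract x.1, Int.fract x.2)
  else f (1 - Int.fract x.1, 1 - Int.fract x.2)

/-- The Steklov mean `f_r`. -/
def steklov (f : ℝ × ℝ → ℝ) (r : ℝ) (x : ℝ × ℝ) : ℝ :=
  (1 / r ^ 4) * ∫ u in (Icc (-(r / 2)) (r / 2) ×ˢ Icc (-(r / 2)) (r / 2)),
    ∫ v in (Icc (-(r / 2)) (r / 2) ×ˢ Icc (-(r / 2)) (r / 2)), f (x + u + v)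

/-- The second-order modulus of smoothness in the Orlicz norm. -/
def modulus2 (Φ : ℝ → ℝ) (f : ℝ × ℝ → ℝ) (r : ℝ) : ℝ :=
  sSup {y | ∃ h : ℝ × ℝ, Real.sqrt (h.1 ^ 2 + h.2 ^ 2) = 1 ∧ ∃ t : ℝ, |t| ≤ r ∧
    y = orliczNorm Φ (fun x => f (x + t • h) + f (x - t • h) - 2 * f x)}

/-- First partial derivative in the first variable. -/
def d1 (g : ℝ × ℝ → ℝ) (x : ℝ × ℝ) : ℝ := deriv (fun t => g (t, x.2)) x.1

/-- First partial derivative in the second variable. -/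
def d2 (g : ℝ × ℝ → ℝ) (x : ℝ × ℝ) : ℝ := deriv (fun t => g (x.1, t)) x.2

/-!
The weights `ptil n k1 k2 x` are a negative multinomial distribution: summing over `k2` and then
over `k1` reduces `∑ ptil = 1` to the negative binomial series twice. The identity
`ptil n (k1 + 1) k2 x * (k1 + 1) / (n + k1 + k2 + 1) = x.1 * ptil n k1 k2 x` lets an index
shift compute the first two moments of the nodes `k1 / (n + k1 + k2)`: their variance is
`x.1 * ∑ ptil * w ≤ 1 / (n + 1)`, where `w = (n + k2) / ((n + k1 + k2) * (n + k1 + k2 + 1))` is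
the first side of `△_{k1,k2}`. Since `c_{n,k1,k2}` is the reciprocal of the area of `△_{k1,k2}`,
`c * ∫_△ (u₁ - x₁)² ≤ 2 / (n + 1)² + 2 * (k1 / (n + k1 + k2) - x₁)²`, and summing against `ptil`
gives `K_n((u₁ - x₁)²; x) ≤ 4 / n`. The second coordinate follows by exchanging the coordinates.
-/

lemma hasSum_prod_of_nonneg {α β : Type*} {f : α × β → ℝ} {g : α → ℝ} {a : ℝ} (hf : 0 ≤ f)
    (hfg : ∀ i, HasSum (fun j => f (i, j)) (g i)) (hg : HasSum g a) : HasSum f a := by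
  have hs : Summable f := (summable_prod_of_nonneg hf).2
    ⟨fun i => (hfg i).summable, by simpa only [fun i => (hfg i).tsum_eq] using hg.summable⟩
  exact (hs.hasSum.prod_fiberwise hfg).unique hg ▸ hs.hasSum

lemma hasSum_comp_succ_fst_iff {M : Type*} [AddCommMonoid M] [TopologicalSpace M]
    {f : ℕ × ℕ → M} {a : M} (hf : ∀ j, f (0, j) = 0) :
    HasSum (fun k : ℕ × ℕ => f (k.1 + 1, k.2)) a ↔ HasSum f a := by
  refine Function.Injective.hasSum_iff (g := fun k : ℕ × ℕ => (k.1 + 1, k.2)) ?_ ?_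
  · rintro ⟨i, j⟩ ⟨i', j'⟩ h
    simp_all
  · rintro ⟨_ | i, j⟩ h
    · exact hf j
    · exact absurd ⟨(i, j), rfl⟩ h

lemma hasSum_mul_sub_sq {ι : Type*} {w a : ι → ℝ} {m v : ℝ} (h0 : HasSum w 1)
    (h1 : HasSum (fun i => w i * a i) m) (h2 : HasSum (fun i => w i * a i ^ 2) (m ^ 2 + v)) :
    HasSum (fun i => w i * (a i - m) ^ 2) v := by
  have h := (h2.sub (h1.mul_left (2 * m))).add (h0.mul_left (m ^ 2))
  rw [show m ^ 2 + v - 2 * m * m + m ^ 2 * 1 = v by ring] at h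
  exact h.congr_fun fun i => by ring

lemma hasSum_choose_mul_pow_mul_one_sub_pow (m : ℕ) {y : ℝ} (hy : |y| < 1) :
    HasSum (fun k : ℕ => ((k + m).choose m : ℝ) * y ^ k * (1 - y) ^ (m + 1)) 1 := by
  have hy1 : (1 - y) ^ (m + 1) ≠ 0 := pow_ne_zero _ (by linarith [le_abs_self y])
  simpa [one_div, inv_mul_cancel₀ hy1] using
    (hasSum_choose_mul_geometric_of_norm_lt_one m (r := y) hy).mul_right ((1 - y) ^ (m + 1))

lemma swap_mem_simplex2 {x : ℝ × ℝ} (hx : x ∈ simplex2) : x.swap ∈ simplex2 :=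
  ⟨hx.2.1, hx.1, by simpa only [Prod.fst_swap, Prod.snd_swap, add_comm] using hx.2.2⟩

section MKZBasis

variable {n k1 k2 : ℕ} {x : ℝ × ℝ}

lemma ptil_nonneg (hx : x ∈ simplex2) : 0 ≤ ptil n k1 k2 x := by
  obtain ⟨h1, h2, h3⟩ := hx
  have : 0 ≤ 1 - x.1 - x.2 := by linarith
  unfold ptil
  positivity

lemma ptil_swap : ptil n k2 k1 x.swap = ptil n k1 k2 x := by
  simp only [ptil, Prod.fst_swap, Prod.snd_swap, add_right_comm n k2 k1]
  ring

lemma ptil_eq_choose_mul_choose :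
    ptil n k1 k2 x = (k1 + n).choose n * (k2 + (n + k1)).choose (n + k1) *
      x.1 ^ k1 * x.2 ^ k2 * (1 - x.1 - x.2) ^ (n + 1) := by
  have h : (k1 + n).choose n * (k2 + (n + k1)).choose (n + k1) *
      (n.factorial * k1.factorial * k2.factorial) = (n + k1 + k2).factorial := by
    rw [show n + k1 + k2 = k2 + (n + k1) by ring,
      ← Nat.add_choose_mul_factorial_mul_factorial k2 (n + k1), add_comm n k1,
      ← Nat.add_choose_mul_factorial_mul_factorial k1 n]
    ring
  rw [ptil, ← h]
  push_cast
  field_simp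

lemma hasSum_ptil_fst_fiber (n k1 : ℕ) (hx2 : |x.2| < 1) :
    HasSum (fun k2 => ptil n k1 k2 x)
      ((k1 + n).choose n * (x.1 / (1 - x.2)) ^ k1 * (1 - x.1 / (1 - x.2)) ^ (n + 1)) := by
  have ht : 1 - x.2 ≠ 0 := by linarith [le_abs_self x.2]
  have hpow : (x.1 / (1 - x.2)) ^ k1 * (1 - x.1 / (1 - x.2)) ^ (n + 1) * (1 - x.2) ^ (n + k1 + 1)
      = x.1 ^ k1 * (1 - x.1 - x.2) ^ (n + 1) := by
    rw [one_sub_div ht, div_pow, div_pow, add_right_comm, pow_add _ (n + 1), sub_sub]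
    field_simp
    ring
  have h := (hasSum_choose_mul_pow_mul_one_sub_pow (n + k1) hx2).mul_left
    ((k1 + n).choose n * (x.1 / (1 - x.2)) ^ k1 * (1 - x.1 / (1 - x.2)) ^ (n + 1))
  rw [mul_one] at h
  refine h.congr_fun fun k2 => ?_
  rw [ptil_eq_choose_mul_choose]
  linear_combination -((k1 + n).choose n * (k2 + (n + k1)).choose (n + k1) * x.2 ^ k2 : ℝ) * hpow

lemma hasSum_ptil (n : ℕ) (hx : x ∈ simplex2) (hs : x.1 + x.2 < 1) :
    HasSum (fun k : ℕ × ℕ => ptil n k.1 k.2 x) 1 := by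
  obtain ⟨h1, h2, -⟩ := id hx
  refine hasSum_prod_of_nonneg (fun k => ptil_nonneg hx)
    (hasSum_ptil_fst_fiber n · (abs_lt.2 ⟨by linarith, by linarith⟩))
    (hasSum_choose_mul_pow_mul_one_sub_pow n ?_)
  rw [abs_lt, lt_div_iff₀ (by linarith), div_lt_one (by linarith)]
  constructor <;> nlinarith

end MKZBasis

def mkzNode (n k1 k2 : ℕ) : ℝ := k1 / (n + k1 + k2)

def mkzWidth (n k1 k2 : ℕ) : ℝ := (n + k2) / ((n + k1 + k2) * (n + k1 + k2 + 1))

section MKZNodes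

variable {n : ℕ} (k1 k2 : ℕ)

lemma mkzNode_succ : mkzNode n (k1 + 1) k2 = (k1 + 1) / (n + k1 + k2 + 1) := by
  rw [mkzNode]
  push_cast
  ring_nf

lemma mkzNode_succ_eq_add_mkzWidth (hn : 0 < n) :
    mkzNode n (k1 + 1) k2 = mkzNode n k1 k2 + mkzWidth n k1 k2 := by
  have : (0 : ℝ) < n := Nat.cast_pos.2 hn
  rw [mkzNode_succ, mkzNode, mkzWidth]
  field_simp
  ring

lemma mkzWidth_pos (hn : 0 < n) : 0 < mkzWidth n k1 k2 := by
  have : (0 : ℝ) < n := Nat.cast_pos.2 hn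
  unfold mkzWidth
  positivity

lemma mkzWidth_le (hn : 0 < n) : mkzWidth n k1 k2 ≤ 1 / (n + 1) := by
  have : (1 : ℝ) ≤ n := Nat.one_le_cast.2 hn
  rw [mkzWidth, div_le_div_iff₀ (by positivity) (by positivity)]
  nlinarith [k1.cast_nonneg (α := ℝ), k2.cast_nonneg (α := ℝ)]

lemma triRect_eq : triRect n k1 k2 =
    Icc (mkzNode n k1 k2) (mkzNode n (k1 + 1) k2) ×ˢ
      Icc (mkzNode n k2 k1) (mkzNode n (k2 + 1) k1) := by
  rw [triRect, mkzNode_succ, mkzNode_succ, mkzNode, mkzNode, add_right_comm (n : ℝ) (k2 : ℝ)]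

lemma volume_real_triRect (hn : 0 < n) :
    volume.real (triRect n k1 k2) = mkzWidth n k1 k2 * mkzWidth n k2 k1 := by
  rw [triRect_eq, Measure.volume_eq_prod, measureReal_prod_prod, Real.volume_real_Icc,
    Real.volume_real_Icc, mkzNode_succ_eq_add_mkzWidth _ _ hn, mkzNode_succ_eq_add_mkzWidth _ _ hn,
    add_sub_cancel_left, add_sub_cancel_left, max_eq_left (mkzWidth_pos _ _ hn).le,
    max_eq_left (mkzWidth_pos _ _ hn).le]

lemma cMKZ_eq_inv : cMKZ n k1 k2 = (mkzWidth n k1 k2 * mkzWidth n k2 k1)⁻¹ := by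
  rw [cMKZ, mkzWidth, mkzWidth, div_mul_div_comm, inv_div]
  ring

lemma cMKZ_comm : cMKZ n k2 k1 = cMKZ n k1 k2 := by
  rw [cMKZ_eq_inv, cMKZ_eq_inv, mul_comm]

lemma setIntegral_triRect_comp_fst (g : ℝ → ℝ) :
    ∫ u in triRect n k2 k1, g u.1 = ∫ u in triRect n k1 k2, g u.2 := by
  rw [triRect_eq, triRect_eq, Measure.volume_eq_prod]
  exact setIntegral_prod_swap _ _ (fun u => g u.2)

lemma cMKZ_mul_setIntegral_le (hn : 0 < n) {f : ℝ × ℝ → ℝ} {B : ℝ} (hf : Continuous f)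
    (hB : ∀ u ∈ triRect n k1 k2, f u ≤ B) :
    cMKZ n k1 k2 * ∫ u in triRect n k1 k2, f u ≤ B := by
  have hpos := mul_pos (mkzWidth_pos k1 k2 hn) (mkzWidth_pos k2 k1 hn)
  have hcompact : IsCompact (triRect n k1 k2) := isCompact_Icc.prod isCompact_Icc
  have hint : ∫ u in triRect n k1 k2, f u ≤ B * (mkzWidth n k1 k2 * mkzWidth n k2 k1) :=
    calc ∫ u in triRect n k1 k2, f u ≤ ∫ _ in triRect n k1 k2, B :=
          setIntegral_mono_on (hf.continuousOn.integrableOn_compact hcompact)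
            (integrableOn_const hcompact.measure_lt_top.ne) hcompact.measurableSet hB
      _ = B * (mkzWidth n k1 k2 * mkzWidth n k2 k1) := by
          rw [setIntegral_const, volume_real_triRect _ _ hn, smul_eq_mul, mul_comm]
  rw [cMKZ_eq_inv, inv_mul_le_iff₀ hpos]
  linarith

end MKZNodes

section MKZMoments

variable {n : ℕ} {x : ℝ × ℝ}

lemma ptil_succ_mul_mkzNode (k1 k2 : ℕ) :
    ptil n (k1 + 1) k2 x * mkzNode n (k1 + 1) k2 = x.1 * ptil n k1 k2 x := by
  have hN : ((n : ℝ) + k1 + k2 + 1) ≠ 0 := by positivity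
  rw [mkzNode_succ, ptil, ptil, show n + (k1 + 1) + k2 = n + k1 + k2 + 1 by ring,
    Nat.factorial_succ, Nat.factorial_succ]
  push_cast
  field_simp
  ring

lemma hasSum_ptil_mul_mkzNode (n : ℕ) (hx : x ∈ simplex2) (hs : x.1 + x.2 < 1) :
    HasSum (fun k : ℕ × ℕ => ptil n k.1 k.2 x * mkzNode n k.1 k.2) x.1 := by
  rw [← hasSum_comp_succ_fst_iff (by simp [mkzNode])]
  simpa only [ptil_succ_mul_mkzNode, mul_one] using (hasSum_ptil n hx hs).mul_left x.1

lemma hasSum_ptil_mul_mkzNode_sq (hn : 0 < n) (hx : x ∈ simplex2) (hs : x.1 + x.2 < 1) {E : ℝ}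
    (hE : HasSum (fun k : ℕ × ℕ => ptil n k.1 k.2 x * mkzWidth n k.1 k.2) E) :
    HasSum (fun k : ℕ × ℕ => ptil n k.1 k.2 x * mkzNode n k.1 k.2 ^ 2)
      (x.1 ^ 2 + x.1 * E) := by
  rw [← hasSum_comp_succ_fst_iff (by simp [mkzNode])]
  have h := ((hasSum_ptil_mul_mkzNode n hx hs).add hE).mul_left x.1
  rw [mul_add, ← sq] at h
  refine h.congr_fun fun k => ?_
  rw [sq, ← mul_assoc, ptil_succ_mul_mkzNode, mkzNode_succ_eq_add_mkzWidth _ _ hn]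
  ring

lemma exists_hasSum_ptil_mul_mkzWidth (hn : 0 < n) (hx : x ∈ simplex2) (hs : x.1 + x.2 < 1) :
    ∃ E : ℝ, 0 ≤ E ∧ E ≤ 1 / (n + 1) ∧
      HasSum (fun k : ℕ × ℕ => ptil n k.1 k.2 x * mkzWidth n k.1 k.2) E := by
  have hnonneg (k : ℕ × ℕ) : 0 ≤ ptil n k.1 k.2 x * mkzWidth n k.1 k.2 :=
    mul_nonneg (ptil_nonneg hx) (mkzWidth_pos _ _ hn).le
  have hle (k : ℕ × ℕ) :
      ptil n k.1 k.2 x * mkzWidth n k.1 k.2 ≤ ptil n k.1 k.2 x * (1 / (n + 1)) :=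
    mul_le_mul_of_nonneg_left (mkzWidth_le _ _ hn) (ptil_nonneg hx)
  have hbound := (hasSum_ptil n hx hs).mul_right (1 / ((n : ℝ) + 1))
  rw [one_mul] at hbound
  have hsum := (Summable.of_nonneg_of_le hnonneg hle hbound.summable).hasSum
  exact ⟨_, hsum.nonneg hnonneg, hasSum_le hle hsum hbound, hsum⟩

lemma exists_hasSum_ptil_mul_mkzNode_sub_sq (hn : 0 < n) (hx : x ∈ simplex2)
    (hs : x.1 + x.2 < 1) : ∃ E : ℝ, 0 ≤ E ∧ E ≤ 1 / (n + 1) ∧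
      HasSum (fun k : ℕ × ℕ => ptil n k.1 k.2 x * (mkzNode n k.1 k.2 - x.1) ^ 2)
        (x.1 * E) := by
  obtain ⟨E, hE0, hE1, hE⟩ := exists_hasSum_ptil_mul_mkzWidth hn hx hs
  exact ⟨E, hE0, hE1, hasSum_mul_sub_sq (hasSum_ptil n hx hs) (hasSum_ptil_mul_mkzNode n hx hs)
    (hasSum_ptil_mul_mkzNode_sq hn hx hs hE)⟩

end MKZMoments

lemma sq_sub_le_of_mem_triRect {n k1 k2 : ℕ} (hn : 0 < n) {u : ℝ × ℝ}
    (hu : u ∈ triRect n k1 k2) (z : ℝ) :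
    (u.1 - z) ^ 2 ≤ 2 / (n + 1) ^ 2 + 2 * (mkzNode n k1 k2 - z) ^ 2 := by
  rw [triRect_eq, mkzNode_succ_eq_add_mkzWidth _ _ hn] at hu
  obtain ⟨⟨hlo, hhi⟩, -⟩ := hu
  have hwidth := mkzWidth_le k1 k2 hn
  have hgap : (u.1 - mkzNode n k1 k2) ^ 2 ≤ (1 / (n + 1)) ^ 2 :=
    pow_le_pow_left₀ (by linarith) (by linarith) 2
  rw [div_pow, one_pow] at hgap
  rw [show (2 : ℝ) / (n + 1) ^ 2 = 2 * (1 / (n + 1) ^ 2) by ring]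
  nlinarith [sq_nonneg (u.1 + z - 2 * mkzNode n k1 k2)]

def mkzTerm (n : ℕ) (f : ℝ × ℝ → ℝ) (x : ℝ × ℝ) (k : ℕ × ℕ) : ℝ :=
  ptil n k.1 k.2 x * cMKZ n k.1 k.2 * ∫ u in triRect n k.1 k.2, f u

section MKZTerms

variable {n : ℕ} {x : ℝ × ℝ}

lemma KMKZ_eq_tsum_mkzTerm {f : ℝ × ℝ → ℝ} (h : Summable (mkzTerm n f x)) :
    KMKZ n f x = ∑' k, mkzTerm n f x k :=
  h.tsum_prod.symm

lemma mkzTerm_nonneg {f : ℝ × ℝ → ℝ} (hf : 0 ≤ f) (hx : x ∈ simplex2) (k : ℕ × ℕ) :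
    0 ≤ mkzTerm n f x k := by
  have hc : 0 ≤ cMKZ n k.1 k.2 := by unfold cMKZ; positivity
  exact mul_nonneg (mul_nonneg (ptil_nonneg hx) hc) (setIntegral_nonneg
    (measurableSet_Icc.prod measurableSet_Icc) fun u _ => hf u)

lemma mkzTerm_sq_sub_fst_le (hn : 0 < n) (hx : x ∈ simplex2) (k : ℕ × ℕ) :
    mkzTerm n (fun u => (u.1 - x.1) ^ 2) x k ≤
      ptil n k.1 k.2 x * (2 / (n + 1) ^ 2 + 2 * (mkzNode n k.1 k.2 - x.1) ^ 2) := by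
  rw [mkzTerm, mul_assoc]
  exact mul_le_mul_of_nonneg_left (cMKZ_mul_setIntegral_le _ _ hn (by fun_prop)
    fun u hu => sq_sub_le_of_mem_triRect hn hu _) (ptil_nonneg hx)

lemma summable_mkzTerm_sq_sub_fst_and_tsum_le (hn : 0 < n) (hx : x ∈ simplex2) :
    Summable (mkzTerm n (fun u => (u.1 - x.1) ^ 2) x) ∧
      ∑' k, mkzTerm n (fun u => (u.1 - x.1) ^ 2) x k ≤ 4 / n := by
  have hn1 : (1 : ℝ) ≤ n := Nat.one_le_cast.2 hn
  rcases hx.2.2.eq_or_lt with hs | hs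
  · have hzero : mkzTerm n (fun u => (u.1 - x.1) ^ 2) x = 0 := by
      funext k
      simp [mkzTerm, ptil, show 1 - x.1 - x.2 = 0 by linarith]
    rw [hzero]
    exact ⟨summable_zero, by simp only [Pi.zero_apply, tsum_zero]; positivity⟩
  obtain ⟨E, hE0, hE1, hE⟩ := exists_hasSum_ptil_mul_mkzNode_sub_sq hn hx hs
  have hbound : HasSum (fun k : ℕ × ℕ => ptil n k.1 k.2 x *
      (2 / (n + 1) ^ 2 + 2 * (mkzNode n k.1 k.2 - x.1) ^ 2)) (2 / (n + 1) ^ 2 + 2 * (x.1 * E)) := by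
    have h := ((hasSum_ptil n hx hs).mul_right (2 / ((n : ℝ) + 1) ^ 2)).add (hE.mul_left 2)
    rw [one_mul] at h
    exact h.congr_fun fun k => by ring
  have hle := mkzTerm_sq_sub_fst_le hn hx
  have hsum := Summable.of_nonneg_of_le (mkzTerm_nonneg (fun u => sq_nonneg _) hx) hle
    hbound.summable
  refine ⟨hsum, (hasSum_le hle hsum.hasSum hbound).trans ?_⟩
  have hxE : x.1 * E ≤ 1 / (n + 1) := by nlinarith [hx.1, hx.2.1]
  have hsq : 1 / ((n : ℝ) + 1) ^ 2 ≤ 1 / (n + 1) :=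
    one_div_le_one_div_of_le (by positivity) (by nlinarith)
  calc (2 / ((n : ℝ) + 1) ^ 2 + 2 * (x.1 * E) : ℝ)
        = 2 * (1 / (n + 1) ^ 2) + 2 * (x.1 * E) := by ring
    _ ≤ 2 * (1 / (n + 1)) + 2 * (1 / (n + 1)) := by gcongr
    _ = 4 / (n + 1) := by ring
    _ ≤ 4 / (n : ℝ) := by
        rw [div_le_div_iff₀ (by positivity) (by linarith)]
        linarith

lemma mkzTerm_comp_snd (g : ℝ → ℝ) (k : ℕ × ℕ) :
    mkzTerm n (fun u => g u.2) x k = mkzTerm n (fun u => g u.1) x.swap k.swap := by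
  rw [mkzTerm, mkzTerm, Prod.fst_swap, Prod.snd_swap, ptil_swap, cMKZ_comm,
    setIntegral_triRect_comp_fst]

lemma KMKZ_comp_snd (g : ℝ → ℝ) (h : Summable (mkzTerm n (fun u => g u.1) x.swap)) :
    KMKZ n (fun u => g u.2) x = KMKZ n (fun u => g u.1) x.swap := by
  have hswap : mkzTerm n (fun u => g u.2) x = mkzTerm n (fun u => g u.1) x.swap ∘ Prod.swap :=
    funext (mkzTerm_comp_snd g)
  rw [KMKZ_eq_tsum_mkzTerm (hswap ▸ h.comp_injective Prod.swap_injective),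
    KMKZ_eq_tsum_mkzTerm h, hswap]
  exact (Equiv.prodComm ℕ ℕ).tsum_eq _

end MKZTerms

theorem KMKZ_second_moment : ∃ C : ℝ, 0 < C ∧ ∀ n : ℕ, 0 < n → ∀ x ∈ simplex2,
    KMKZ n (fun u => (u.1 - x.1) ^ 2) x ≤ C / n ∧
    KMKZ n (fun u => (u.2 - x.2) ^ 2) x ≤ C / n := by
  refine ⟨4, by norm_num, fun n hn x hx => ⟨?_, ?_⟩⟩
  · obtain ⟨hsum, hle⟩ := summable_mkzTerm_sq_sub_fst_and_tsum_le hn hx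
    rwa [KMKZ_eq_tsum_mkzTerm hsum]
  · obtain ⟨hsum, hle⟩ := summable_mkzTerm_sq_sub_fst_and_tsum_le hn (swap_mem_simplex2 hx)
    rw [Prod.fst_swap] at hsum hle
    rwa [KMKZ_comp_snd (fun t => (t - x.2) ^ 2) hsum, KMKZ_eq_tsum_mkzTerm hsum]
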